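/- arXiv:2508.00084 — 4 statements merged into one kernel-verified Lean document; each statement's English description precedes it below -/
import Mathlib

section
/- Let F be a field of characteristic ≠ 2 and T = [t_{ij}] a strictly lower triangular n×n matrix over F. Let A(T) be the commutative unital F-algebra generated by X_1,…,X_n subject to X_1² = 0 and X_i² = ∑_{j<i} t_{ij} X_j X_i for 2 ≤ i ≤ n. Then the set {X_1^{a_1} ⋯ X_n^{a_n} : a_i ∈ {0,1}} is an F-basis of A(T); in particular dim_F A(T) = 2^n. -/
open MvPolynomial

noncomputable section

variable (F : Type) [Field F]

/-- The defining relations of the nil graded algebra `A(T)`. -/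
def relSet {n : ℕ} (T : Matrix (Fin n) (Fin n) F) : Set (MvPolynomial (Fin n) F) :=
  { p | ∃ i : Fin n,
      p = X i ^ 2 - ∑ j ∈ Finset.univ.filter (fun j => j < i), C (T i j) * X j * X i }

/-- The nil graded algebra `A(T)` associated to a strictly lower triangular matrix `T`. -/
abbrev NTAlg {n : ℕ} (T : Matrix (Fin n) (Fin n) F) : Type :=
  MvPolynomial (Fin n) F ⧸ Ideal.span (relSet F T)

/-- The generators `X i` of `A(T)`. -/
def NTgen {n : ℕ} (T : Matrix (Fin n) (Fin n) F) (i : Fin n) : NTAlg F T :=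
  Ideal.Quotient.mk _ (X i)

/-- An algebra isomorphism is degree preserving iff it (and its inverse) maps the span
of the degree-2 generators into the span of the degree-2 generators. -/
def IsGradedIso {n : ℕ} {T S : Matrix (Fin n) (Fin n) F}
    (e : NTAlg F T ≃ₐ[F] NTAlg F S) : Prop :=
  (∀ j, e (NTgen F T j) ∈ Submodule.span F (Set.range (NTgen F S))) ∧
  (∀ j, e.symm (NTgen F S j) ∈ Submodule.span F (Set.range (NTgen F T)))

/-- `A(T)` and `A(S)` are isomorphic in the category 𝒩𝒯. -/
def NTIso {n : ℕ} (T S : Matrix (Fin n) (Fin n) F) : Prop :=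
  ∃ e : NTAlg F T ≃ₐ[F] NTAlg F S, IsGradedIso F e

/-- A matrix is strictly lower triangular. -/
def SLTM {n : ℕ} (T : Matrix (Fin n) (Fin n) F) : Prop :=
  ∀ i j : Fin n, i ≤ j → T i j = 0

/-- The key system of equations (Theorem `theo-Key-condition`). -/
def KeyEq {n : ℕ} (T S Γ : Matrix (Fin n) (Fin n) F) : Prop :=
  ∀ r i k : Fin n, i < k →
    2 * Γ i r * Γ k r + Γ k r ^ 2 * S k i =
      ∑ j ∈ Finset.univ.filter (fun j => j < r),
        T r j * (Γ k j * Γ k r * S k i + Γ k j * Γ i r + Γ i j * Γ k r)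

/-!
Let `e_a`, for `a : Fin n → Bool`, be the standard basis of the free module on the subsets of
`Fin n`. Since `t_ij` only matters for `j < i`, the rules `X_i e_a = e_(a ∪ {i})` for `i ∉ a` and
`X_i e_a = ∑_{j<i} t_ij X_j e_a` for `i ∈ a` define operators recursively in `i`. By induction on
`i + k` they commute, and they satisfy the defining relations, so `A(T)` acts on this module and
the square-free monomial `m_a` sends `e_∅` to `e_a`: the `m_a` are linearly independent. Read in
`A(T)`, the same recursion shows that `X_i m_a` lies in the span of the `m_a`, so this span is an
ideal containing `1`.
-/

section

variable {F}

open Finset Function MvPolynomial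
open Finsupp (single linearCombination linearCombination_single)

section Operators

variable {R : Type*} [CommSemiring R] {n : ℕ} (T : Matrix (Fin n) (Fin n) R)

def mulGenBasis : Fin n → (Fin n → Bool) → ((Fin n → Bool) →₀ R)
  | i, a =>
    if a i then ∑ j ∈ (univ.filter (· < i)).attach, T i j • mulGenBasis j a
    else single (update a i true) 1
  termination_by i => i
  decreasing_by exact (mem_filter.mp j.2).2

def mulGen (i : Fin n) : Module.End R ((Fin n → Bool) →₀ R) :=
  linearCombination R (mulGenBasis T i)

theorem mulGen_single_of_false {i : Fin n} {a : Fin n → Bool} (h : a i = false) :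
    mulGen T i (single a 1) = single (update a i true) 1 := by
  rw [mulGen, linearCombination_single, one_smul, mulGenBasis, if_neg (by simp [h])]

theorem mulGen_single_of_true {i : Fin n} {a : Fin n → Bool} (h : a i = true) :
    mulGen T i (single a 1) = ∑ j ∈ univ.filter (· < i), T i j • mulGen T j (single a 1) := by
  simp only [mulGen, linearCombination_single, one_smul]
  rw [mulGenBasis, if_pos h]
  exact sum_attach _ fun j => T i j • mulGenBasis T j a

theorem mulGen_mulGen_single_of_false {i k : Fin n} {a : Fin n → Bool} (hk : a k = false)
    (ih : ∀ j < i, mulGen T j (mulGen T k (single a 1)) = mulGen T k (mulGen T j (single a 1))) :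
    mulGen T i (mulGen T k (single a 1)) = mulGen T k (mulGen T i (single a 1)) := by
  by_cases hik : i = k
  · rw [hik]
  rw [mulGen_single_of_false T hk]
  cases hi : a i with
  | false =>
    rw [mulGen_single_of_false T hi, mulGen_single_of_false T (by simp [hik, hi]),
      mulGen_single_of_false T (by simp [Ne.symm hik, hk]), update_comm hik]
  | true =>
    rw [mulGen_single_of_true T (by simp [hik, hi]), mulGen_single_of_true T hi, map_sum]
    refine sum_congr rfl fun j hj => ?_
    rw [map_smul, ← mulGen_single_of_false T hk, ih j (mem_filter.mp hj).2]

theorem mulGen_mulGen_single (i k : Fin n) (a : Fin n → Bool) :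
    mulGen T i (mulGen T k (single a 1)) = mulGen T k (mulGen T i (single a 1)) := by
  induction h : i.1 + k.1 using Nat.strong_induction_on generalizing i k with
  | _ s ih =>
  have ih' (j l : Fin n) (hjl : j.1 + l.1 < s) :
      mulGen T j (mulGen T l (single a 1)) = mulGen T l (mulGen T j (single a 1)) :=
    ih _ hjl j l rfl
  cases hk : a k
  · exact mulGen_mulGen_single_of_false T hk fun j hj => ih' j k (by omega)
  cases hi : a i
  · exact (mulGen_mulGen_single_of_false T hi fun l hl => ih' l i (by omega)).symm
  -- X_i X_k e_a = ∑_{l<k} ∑_{j<i} t_kl t_ij X_l X_j e_a, which is symmetric in (i, k)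
  have expand (i k : Fin n) (hi : a i = true) (hk : a k = true)
      (ih : ∀ l < k, mulGen T i (mulGen T l (single a 1)) = mulGen T l (mulGen T i (single a 1))) :
      mulGen T i (mulGen T k (single a 1)) = ∑ l ∈ univ.filter (· < k), ∑ j ∈ univ.filter (· < i),
        (T k l * T i j) • mulGen T l (mulGen T j (single a 1)) := by
    rw [mulGen_single_of_true T hk, map_sum]
    refine sum_congr rfl fun l hl => ?_
    rw [map_smul, ih l (mem_filter.mp hl).2, mulGen_single_of_true T hi, map_sum, Finset.smul_sum]
    simp only [map_smul, smul_smul]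
  rw [expand i k hi hk fun l hl => ih' i l (by omega),
    expand k i hk hi fun j hj => ih' k j (by omega), Finset.sum_comm]
  refine sum_congr rfl fun j hj => sum_congr rfl fun l hl => ?_
  rw [mul_comm, ih' j l (by simp at hj hl; omega)]

theorem mulGen_commute (i k : Fin n) : Commute (mulGen T i) (mulGen T k) := by
  ext a : 2
  exact mulGen_mulGen_single T i k a

theorem mulGen_mul_self (i : Fin n) :
    mulGen T i * mulGen T i = ∑ j ∈ univ.filter (· < i), T i j • (mulGen T j * mulGen T i) := by
  ext a : 2
  simp only [LinearMap.coe_comp, comp_apply, Finsupp.lsingle_apply, Module.End.mul_apply,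
    LinearMap.sum_apply, LinearMap.smul_apply]
  cases hi : a i with
  | false =>
    rw [mulGen_single_of_false T hi]
    exact mulGen_single_of_true T (update_self ..)
  | true =>
    conv_lhs => rw [mulGen_single_of_true T hi, map_sum]
    refine sum_congr rfl fun j _ => ?_
    rw [map_smul, mulGen_mulGen_single]

end Operators

open scoped IsMulCommutative in
def MvPolynomial.aevalOfCommute {σ R A : Type*} [CommSemiring R] [Semiring A] [Algebra R A]
    (f : σ → A) (hf : ∀ i j, Commute (f i) (f j)) : MvPolynomial σ R →ₐ[R] A :=
  have := Algebra.isMulCommutative_adjoin R (s := Set.range f) <| by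
    rintro _ ⟨i, rfl⟩ _ ⟨j, rfl⟩
    exact hf i j
  (Algebra.adjoin R (Set.range f)).val.comp (aeval fun i => ⟨f i, Algebra.subset_adjoin ⟨i, rfl⟩⟩)

@[simp]
theorem MvPolynomial.aevalOfCommute_X {σ R A : Type*} [CommSemiring R] [Semiring A] [Algebra R A]
    (f : σ → A) (hf : ∀ i j, Commute (f i) (f j)) (i : σ) :
    aevalOfCommute (R := R) f hf (X i) = f i := by
  simp [aevalOfCommute]

variable {n : ℕ} (T : Matrix (Fin n) (Fin n) F)

theorem NTgen_sq (i : Fin n) :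
    NTgen F T i ^ 2 = ∑ j ∈ univ.filter (· < i), T i j • (NTgen F T j * NTgen F T i) := by
  have : NTgen F T i ^ 2 = Ideal.Quotient.mk _
      (∑ j ∈ univ.filter (· < i), C (T i j) * X j * X i) :=
    Ideal.Quotient.eq.mpr (Ideal.subset_span ⟨i, rfl⟩)
  rw [this, map_sum]
  refine sum_congr rfl fun j _ => ?_
  rw [mul_assoc, ← smul_eq_C_mul, ← Ideal.Quotient.mkₐ_eq_mk F, map_smul]
  rfl

theorem span_relSet_le_ker :
    Ideal.span (relSet F T) ≤ RingHom.ker (aevalOfCommute (mulGen T) (mulGen_commute T)) := by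
  rw [Ideal.span_le]
  rintro _ ⟨i, rfl⟩
  simp [sq, mulGen_mul_self, ← smul_eq_C_mul]

def regularRep : NTAlg F T →ₐ[F] Module.End F ((Fin n → Bool) →₀ F) :=
  Ideal.Quotient.liftₐ _ (aevalOfCommute (mulGen T) (mulGen_commute T)) fun _ hp =>
    span_relSet_le_ker T hp

@[simp]
theorem regularRep_NTgen (i : Fin n) : regularRep T (NTgen F T i) = mulGen T i :=
  aevalOfCommute_X _ (mulGen_commute T) i

def sqfreeMonomial (a : Fin n → Bool) : NTAlg F T :=
  ∏ i, if a i then NTgen F T i else 1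

theorem NTgen_mul_sqfreeMonomial_of_false {i : Fin n} {a : Fin n → Bool} (h : a i = false) :
    NTgen F T i * sqfreeMonomial T a = sqfreeMonomial T (update a i true) := by
  rw [sqfreeMonomial, sqfreeMonomial, Fintype.prod_eq_mul_prod_compl i,
    Fintype.prod_eq_mul_prod_compl i, h, update_self, if_pos rfl, if_neg Bool.false_ne_true,
    one_mul]
  congr 1
  refine prod_congr rfl fun k hk => ?_
  rw [update_of_ne (by simpa using hk)]

theorem regularRep_prod_NTgen_single (s : Finset (Fin n)) {b : Fin n → Bool}
    (hb : ∀ i ∈ s, b i = false) :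
    regularRep T (∏ i ∈ s, NTgen F T i) (single b 1) =
      single (fun i => b i || decide (i ∈ s)) 1 := by
  induction s using Finset.induction_on with
  | empty => simp
  | insert j s hj ih =>
    rw [prod_insert hj, map_mul, Module.End.mul_apply, ih fun i hi => hb i (mem_insert_of_mem hi),
      regularRep_NTgen, mulGen_single_of_false T (by simp [hj, hb j (mem_insert_self j s)])]
    congr 1
    funext i
    by_cases hij : i = j <;> simp [hij]

theorem linearIndependent_sqfreeMonomial : LinearIndependent F (sqfreeMonomial T) := by
  let evalEmpty := (LinearMap.applyₗ (single (fun _ => false) 1)).comp (regularRep T).toLinearMap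
  refine LinearIndependent.of_comp evalEmpty ?_
  convert Finsupp.linearIndependent_single_one F (Fin n → Bool) with a
  rw [comp_apply, sqfreeMonomial, ← prod_filter]
  simp [evalEmpty, regularRep_prod_NTgen_single]

theorem NTgen_mul_sqfreeMonomial_mem_span (i : Fin n) (a : Fin n → Bool) :
    NTgen F T i * sqfreeMonomial T a ∈ Submodule.span F (Set.range (sqfreeMonomial T)) := by
  induction i using WellFoundedLT.induction with
  | _ i ih =>
  cases h : a i with
  | false => exact Submodule.subset_span ⟨_, (NTgen_mul_sqfreeMonomial_of_false T h).symm⟩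
  | true =>
    have : sqfreeMonomial T a = NTgen F T i * sqfreeMonomial T (update a i false) := by
      rw [NTgen_mul_sqfreeMonomial_of_false T (update_self ..), update_idem, ← h, update_eq_self]
    rw [this, ← mul_assoc, ← sq, NTgen_sq, sum_mul]
    refine Submodule.sum_mem _ fun j hj => ?_
    rw [smul_mul_assoc, mul_assoc, ← this]
    exact Submodule.smul_mem _ _ (ih j (mem_filter.mp hj).2)

theorem span_sqfreeMonomial : Submodule.span F (Set.range (sqfreeMonomial T)) = ⊤ := by
  set S := Submodule.span F (Set.range (sqfreeMonomial T))
  have mul_mem (i : Fin n) {v : NTAlg F T} (hv : v ∈ S) : v * NTgen F T i ∈ S := by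
    rw [mul_comm]
    refine (Submodule.span_le (p := S.comap (LinearMap.mulLeft F (NTgen F T i)))).mpr ?_ hv
    rintro _ ⟨a, rfl⟩
    exact NTgen_mul_sqfreeMonomial_mem_span T i a
  rw [eq_top_iff]
  rintro v -
  obtain ⟨p, rfl⟩ := Ideal.Quotient.mk_surjective v
  induction p using MvPolynomial.induction_on with
  | C r =>
    have : sqfreeMonomial T (fun _ => false) = 1 := by simp [sqfreeMonomial]
    rw [← mul_one (C r), ← smul_eq_C_mul, ← Ideal.Quotient.mkₐ_eq_mk F, map_smul, map_one, ← this]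
    exact Submodule.smul_mem _ _ (Submodule.subset_span ⟨_, rfl⟩)
  | add p q hp hq =>
    rw [map_add]
    exact S.add_mem hp hq
  | mul_X p i hp =>
    rw [map_mul]
    exact mul_mem i hp

end

theorem stmt0 {n : ℕ} (T : Matrix (Fin n) (Fin n) F) :
    LinearIndependent F
        (fun a : Fin n → Bool => ∏ i : Fin n, if a i then NTgen F T i else 1) ∧
    Submodule.span F
        (Set.range (fun a : Fin n → Bool => ∏ i : Fin n, if a i then NTgen F T i else 1)) = ⊤ ∧
    Module.finrank F (NTAlg F T) = 2 ^ n := by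
  refine ⟨linearIndependent_sqfreeMonomial T, span_sqfreeMonomial T, ?_⟩
  rw [Module.finrank_eq_card_basis
    (Module.Basis.mk (linearIndependent_sqfreeMonomial T) (span_sqfreeMonomial T).ge)]
  simp
end
end

section
/- Let F be an algebraically closed field of characteristic ≠ 2. Let T be the 4×4 strictly lower triangular matrix with rows (0,0,0,0), (0,0,0,0), (1,1,0,0), (1,1,0,0), and let S be the 4×4 strictly lower triangular matrix with rows (0,0,0,0), (0,0,0,0), (a,b,0,0), (c,d,0,0) where a, b, c, d ∈ F are all nonzero. Then the graded algebras A(T) and A(S) are isomorphic. -/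
open MvPolynomial

noncomputable section

variable (F : Type) [Field F]

/-! A graded isomorphism `A(T) ≃ A(S)` is a linear change of generators
`X r ↦ ∑ k, Γ k r • Y k`. Expanding squares with the relations `Y k ^ 2 = ∑ i < k, S k i • Y i Y k`
shows that such a substitution respects the relations of `A(T)` as soon as `Γ` solves the key
equations `KeyEq T S Γ`; if moreover `Γ` is invertible and its inverse solves `KeyEq S T Γ⁻¹`, the
two substitutions are mutually inverse.

Here `X₀ ↦ a Y₀`, `X₁ ↦ b Y₁`, `X₂ ↦ Y₂`, `X₃ ↦ ((a - δc)/2) Y₀ + ((b - δd)/2) Y₁ + δ Y₃` works,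
where `δ² = ab/(cd)`: the coefficients of `Y₀Y₃` and `Y₁Y₃` force the two halves, and that of
`Y₀Y₁` then forces `δ² cd = ab`. This square root is where algebraic closedness is used. -/

open Finset

theorem Finset.sum_sum_eq_sum_sum_lt_add_sum_diag {ι M : Type*} [Fintype ι] [LinearOrder ι]
    [AddCommMonoid M] (f : ι → ι → M) :
    ∑ i, ∑ k, f i k = ∑ k, ∑ i ∈ univ.filter (· < k), (f i k + f k i) + ∑ k, f k k := by
  have split (k : ι) : ∑ i, f i k =
      ∑ i ∈ univ.filter (· < k), f i k + ∑ i ∈ univ.filter (k < ·), f i k + f k k := by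
    have hge : univ.filter (fun i => ¬ i < k) = insert k (univ.filter (k < ·)) := by
      ext i; simp [le_iff_eq_or_lt, eq_comm]
    rw [← sum_filter_add_sum_filter_not univ (· < k), hge, sum_insert (by simp), add_assoc,
      add_comm (f k k)]
  have swap : ∑ k, ∑ i ∈ univ.filter (k < ·), f i k = ∑ k, ∑ i ∈ univ.filter (· < k), f k i :=
    sum_comm' (by simp)
  rw [sum_comm, sum_congr rfl fun k _ => split k, sum_add_distrib, sum_add_distrib, swap,
    ← sum_add_distrib]
  simp only [sum_add_distrib]

section Relations

variable {F} {ι R A : Type*} [Fintype ι] [LinearOrder ι] [CommSemiring R] [CommSemiring A]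
  [Algebra R A]

def SatisfiesNTRel (T : Matrix ι ι R) (y : ι → A) : Prop :=
  ∀ k, y k ^ 2 = ∑ i ∈ univ.filter (· < k), T k i • (y i * y k)

theorem SatisfiesNTRel.sum_smul_mul_sum_smul {S : Matrix ι ι R} {y : ι → A}
    (hy : SatisfiesNTRel S y) (β γ : ι → R) :
    (∑ i, β i • y i) * (∑ k, γ k • y k) =
      ∑ k, ∑ i ∈ univ.filter (· < k),
        (β i * γ k + β k * γ i + β k * γ k * S k i) • (y i * y k) := by
  have diag (k : ι) : (β k * γ k) • (y k * y k) =
      ∑ i ∈ univ.filter (· < k), (β k * γ k * S k i) • (y i * y k) := by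
    simp only [← sq, hy k, smul_sum, smul_smul]
  rw [sum_mul_sum, sum_sum_eq_sum_sum_lt_add_sum_diag, ← sum_add_distrib]
  refine sum_congr rfl fun k _ => ?_
  simp only [smul_mul_smul_comm, diag, ← sum_add_distrib, mul_comm (y k) (y _), ← add_smul]

theorem SatisfiesNTRel.subst_of_keyEq {n : ℕ} {T S Γ : Matrix (Fin n) (Fin n) F}
    (hΓ : KeyEq F T S Γ) [Algebra F A] {y : Fin n → A} (hy : SatisfiesNTRel S y) :
    SatisfiesNTRel T fun r => ∑ k, Γ k r • y k := by
  intro r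
  simp only [sq, hy.sum_smul_mul_sum_smul, smul_sum, smul_smul]
  rw [sum_comm]
  refine sum_congr rfl fun k _ => ?_
  rw [sum_comm]
  refine sum_congr rfl fun i hi => ?_
  rw [← sum_smul]
  congr 1
  convert hΓ r i k (mem_filter.mp hi).2 using 1
  · ring
  · exact sum_congr rfl fun j _ => by ring

end Relations

namespace NTAlg

variable {F} {n : ℕ}

theorem satisfiesNTRel_NTgen (T : Matrix (Fin n) (Fin n) F) : SatisfiesNTRel T (NTgen F T) := by
  intro i
  have h : Ideal.Quotient.mk (Ideal.span (relSet F T))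
      (X i ^ 2 - ∑ j ∈ univ.filter (· < i), C (T i j) * X j * X i) = 0 :=
    Ideal.Quotient.eq_zero_iff_mem.mpr (Ideal.subset_span ⟨i, rfl⟩)
  have hC (r : F) : Ideal.Quotient.mk (Ideal.span (relSet F T)) (C r) = algebraMap F _ r := rfl
  simpa [sub_eq_zero, NTgen, Algebra.smul_def, mul_assoc, hC] using h

def lift (T : Matrix (Fin n) (Fin n) F) {A : Type*} [CommRing A] [Algebra F A] (g : Fin n → A)
    (hg : SatisfiesNTRel T g) : NTAlg F T →ₐ[F] A :=
  Ideal.Quotient.liftₐ _ (aeval g) fun p hp => by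
    refine (RingHom.mem_ker ..).mp (Ideal.span_le.mpr ?_ hp)
    rintro _ ⟨i, rfl⟩
    simp [hg i, Algebra.smul_def, mul_assoc]

theorem lift_NTgen {T : Matrix (Fin n) (Fin n) F} {A : Type*} [CommRing A] [Algebra F A]
    {g : Fin n → A} (hg : SatisfiesNTRel T g) (i : Fin n) : lift T g hg (NTgen F T i) = g i :=
  aeval_X g i

theorem algHom_ext {T : Matrix (Fin n) (Fin n) F} {A : Type*} [CommRing A] [Algebra F A]
    {f g : NTAlg F T →ₐ[F] A} (h : ∀ i, f (NTgen F T i) = g (NTgen F T i)) : f = g :=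
  Ideal.Quotient.algHom_ext _ (MvPolynomial.algHom_ext h)

variable {T S Γ Δ : Matrix (Fin n) (Fin n) F}

def substHom (hΓ : KeyEq F T S Γ) : NTAlg F T →ₐ[F] NTAlg F S :=
  lift T _ ((satisfiesNTRel_NTgen S).subst_of_keyEq hΓ)

theorem substHom_NTgen (hΓ : KeyEq F T S Γ) (r : Fin n) :
    substHom hΓ (NTgen F T r) = ∑ k, Γ k r • NTgen F S k :=
  lift_NTgen _ r

theorem substHom_NTgen_mem_span (hΓ : KeyEq F T S Γ) (r : Fin n) :
    substHom hΓ (NTgen F T r) ∈ Submodule.span F (Set.range (NTgen F S)) := by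
  rw [substHom_NTgen]
  exact Submodule.sum_mem _ fun k _ => Submodule.smul_mem _ _ (Submodule.subset_span ⟨k, rfl⟩)

theorem substHom_comp_substHom (hΓ : KeyEq F T S Γ) (hΔ : KeyEq F S T Δ) (h : Δ * Γ = 1) :
    (substHom hΔ).comp (substHom hΓ) = AlgHom.id F (NTAlg F T) := by
  refine algHom_ext fun r => ?_
  simp only [AlgHom.comp_apply, substHom_NTgen, map_sum, map_smul, smul_sum, smul_smul]
  rw [sum_comm]
  simp only [← sum_smul, mul_comm (Γ _ r), ← Matrix.mul_apply, h, Matrix.one_apply, ite_smul,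
    one_smul, zero_smul, sum_ite_eq', mem_univ, if_true, AlgHom.id_apply]

theorem _root_.ntIso_of_keyEq (hΓ : KeyEq F T S Γ) (hΔ : KeyEq F S T Δ) (h : Γ * Δ = 1) :
    NTIso F T S :=
  ⟨.ofAlgHom (substHom hΓ) (substHom hΔ) (substHom_comp_substHom hΔ hΓ h)
    (substHom_comp_substHom hΓ hΔ (mul_eq_one_comm.mp h)),
    substHom_NTgen_mem_span hΓ, by simpa [AlgEquiv.ofAlgHom_symm] using substHom_NTgen_mem_span hΔ⟩

end NTAlg

section TwoRows

variable {F}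

def twoRowMatrix (a b c d : F) : Matrix (Fin 4) (Fin 4) F :=
  !![0, 0, 0, 0; 0, 0, 0, 0; a, b, 0, 0; c, d, 0, 0]

def substMatrix (a b c d δ : F) : Matrix (Fin 4) (Fin 4) F :=
  !![a, 0, 0, (a - δ * c) / 2; 0, b, 0, (b - δ * d) / 2; 0, 0, 1, 0; 0, 0, 0, δ]

def substMatrixInv (a b c d δ : F) : Matrix (Fin 4) (Fin 4) F :=
  !![a⁻¹, 0, 0, (δ * c - a) / (2 * a * δ); 0, b⁻¹, 0, (δ * d - b) / (2 * b * δ);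
    0, 0, 1, 0; 0, 0, 0, δ⁻¹]

variable {a b c d δ : F}

theorem substMatrix_mul_substMatrixInv (ha : a ≠ 0) (hb : b ≠ 0) (hδ : δ ≠ 0) :
    substMatrix a b c d δ * substMatrixInv a b c d δ = 1 := by
  ext i j
  fin_cases i <;> fin_cases j <;>
    simp [substMatrix, substMatrixInv, Matrix.mul_apply, Fin.sum_univ_four] <;> field_simp <;> ring

theorem keyEq_substMatrix (h2 : (2 : F) ≠ 0) (hδ : δ ^ 2 * (c * d) = a * b) :
    KeyEq F (twoRowMatrix 1 1 1 1) (twoRowMatrix a b c d) (substMatrix a b c d δ) := by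
  intro r i k hik
  fin_cases r <;> fin_cases i <;> fin_cases k <;>
    simp [twoRowMatrix, substMatrix, Finset.sum_filter, Fin.sum_univ_four] at hik ⊢ <;>
    field_simp <;> grind

theorem keyEq_substMatrixInv (h2 : (2 : F) ≠ 0) (ha : a ≠ 0) (hb : b ≠ 0) (hδ0 : δ ≠ 0)
    (hδ : δ ^ 2 * (c * d) = a * b) :
    KeyEq F (twoRowMatrix a b c d) (twoRowMatrix 1 1 1 1) (substMatrixInv a b c d δ) := by
  intro r i k hik
  fin_cases r <;> fin_cases i <;> fin_cases k <;>
    simp [twoRowMatrix, substMatrixInv, Finset.sum_filter, Fin.sum_univ_four] at hik ⊢ <;>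
    field_simp <;> grind

end TwoRows

/-- Over an algebraically closed field of characteristic `≠ 2`, the standard
matrix with third and fourth rows `(1,1,0,0)` is isomorphic to any matrix with
rows `(a,b,0,0)`, `(c,d,0,0)` with `a,b,c,d` nonzero. -/
theorem stmt5 [IsAlgClosed F] (h2 : (2 : F) ≠ 0) (a b c d : F)
    (ha : a ≠ 0) (hb : b ≠ 0) (hc : c ≠ 0) (hd : d ≠ 0) :
    NTIso F
      !![(0:F),0,0,0; 0,0,0,0; 1,1,0,0; 1,1,0,0]
      !![(0:F),0,0,0; 0,0,0,0; a,b,0,0; c,d,0,0] := by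
  obtain ⟨δ, hδsq⟩ := IsAlgClosed.exists_pow_nat_eq (a * b / (c * d)) two_pos
  have hδ : δ ^ 2 * (c * d) = a * b := by rw [hδsq]; field_simp
  have hδ0 : δ ≠ 0 := by rintro rfl; simp [ha, hb, eq_comm] at hδ
  exact ntIso_of_keyEq (keyEq_substMatrix h2 hδ) (keyEq_substMatrixInv h2 ha hb hδ0 hδ)
    (substMatrix_mul_substMatrixInv ha hb hδ0)
end
end

section
/- Let F be a field of characteristic ≠ 2 with v ∈ F, 2v + 1 ≠ 0. Set u = −v/(2v+1). Then the 4×4 matrix Γ with rows (1, 0, −v, 0), (0, (2v+1)², 2v²+v, 0), (0, 0, 2v+1, 0), (0, 0, 0, 2v+1) is invertible and satisfies, for all 1 ≤ r ≤ 4 and 1 ≤ i < k ≤ 4, the equation 2γ_{ir}γ_{kr} + γ_{kr}² s_{ki} = ∑_{j<r} t_{rj}(γ_{kj}γ_{kr} s_{ki} + γ_{kj}γ_{ir} + γ_{ij}γ_{kr}), where T has rows (0,0,0,0), (0,0,0,0), (1,1,0,0), (0,0,1,0) and S has rows (0,0,0,0), (0,0,0,0), (1,1,0,0), (u,v,1,0).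 -/
open MvPolynomial

noncomputable section

variable (F : Type) [Field F]

def gammaMat (v : F) : Matrix (Fin 4) (Fin 4) F :=
  !![1, 0, -v, 0; 0, (2*v+1)^2, 2*v^2 + v, 0; 0, 0, 2*v+1, 0; 0, 0, 0, 2*v+1]

def tMat : Matrix (Fin 4) (Fin 4) F :=
  !![0,0,0,0; 0,0,0,0; 1,1,0,0; 0,0,1,0]

def sMat (u v : F) : Matrix (Fin 4) (Fin 4) F :=
  !![0,0,0,0; 0,0,0,0; 1,1,0,0; u,v,1,0]

theorem isUpperTriangular_gammaMat (v : F) : (gammaMat F v).IsUpperTriangular := by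
  intro i j hji
  fin_cases i <;> fin_cases j <;> simp [gammaMat] at hji ⊢

theorem det_gammaMat (v : F) : (gammaMat F v).det = (2*v + 1)^4 := by
  rw [Matrix.det_of_isUpperTriangular (isUpperTriangular_gammaMat F v), Fin.prod_univ_four]
  simp [gammaMat]
  ring

theorem isUnit_gammaMat {v : F} (hv : 2*v + 1 ≠ 0) : IsUnit (gammaMat F v) := by
  rw [Matrix.isUnit_iff_isUnit_det, det_gammaMat]
  exact (IsUnit.mk0 _ hv).pow 4

/-- With indices from `0`, the equations with `r = 3` read `(2v+1) * S 3 i = Γ i 2` for `i < 3`: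
the last row of `S` is column `2` of `Γ` divided by `2v+1`. All other equations are polynomial
identities in `v`. -/
theorem keyEq_gammaMat {u v : F} (hu : (2*v + 1) * u = -v) :
    KeyEq F (tMat F) (sMat F u v) (gammaMat F v) := by
  intro r i k hik
  fin_cases r <;> fin_cases i <;> fin_cases k <;>
    simp only [tMat, sMat, gammaMat, Finset.sum_filter, Fin.sum_univ_four, Matrix.of_apply,
      Matrix.cons_val', Matrix.cons_val, Matrix.cons_val_zero, Matrix.cons_val_one,
      Matrix.cons_val_fin_one, Fin.isValue, Fin.zero_eta, Fin.mk_one, Fin.reduceFinMk,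
      Fin.reduceLT, lt_self_iff_false, ↓reduceIte] at hik ⊢ <;>
    first | ring1 | linear_combination (2*v + 1) * hu

theorem stmt9 (v : F) (h2v : 2*v + 1 ≠ 0) (u : F)
    (hu : u = -v / (2*v + 1)) :
    IsUnit !![(1:F), 0, -v, 0; 0, (2*v+1)^2, 2*v^2 + v, 0; 0, 0, 2*v+1, 0; 0, 0, 0, 2*v+1] ∧
    KeyEq F
      !![(0:F),0,0,0; 0,0,0,0; 1,1,0,0; 0,0,1,0]
      !![(0:F),0,0,0; 0,0,0,0; 1,1,0,0; u,v,1,0]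
      !![(1:F), 0, -v, 0; 0, (2*v+1)^2, 2*v^2 + v, 0; 0, 0, 2*v+1, 0; 0, 0, 0, 2*v+1] :=
  ⟨isUnit_gammaMat F h2v, keyEq_gammaMat F (by rw [hu]; field_simp)⟩
end
end

section
/- Let F be a field of characteristic ≠ 2, and let T be a strictly lower triangular n×n matrix in first reduced echelon form (1-REF). If A(T) ≅ A(0_n) as graded algebras, then T = 0_n. -/
open MvPolynomial

noncomputable section

variable (F : Type) [Field F]

/-- `(r,c)` is the leader position of row `r`: the last nonzero entry of the row. -/
def IsLeader {n : ℕ} (T : Matrix (Fin n) (Fin n) F) (r c : Fin n) : Prop :=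
  T r c ≠ 0 ∧ ∀ j, c < j → T r j = 0

/-- First reduced echelon form (1-REF), 0-indexed version of Definition 3.1. -/
def Is1REF {n : ℕ} (T : Matrix (Fin n) (Fin n) F) : Prop :=
  (∀ r r' : Fin n, (∃ c, T r c ≠ 0) → r ≤ r' → ∃ c, T r' c ≠ 0) ∧
  (∀ r c : Fin n, IsLeader F T r c →
      0 < (c : ℕ) ∧ ∃ i : Fin n, i < c ∧ 2 * T r i + T r c * T c i ≠ 0) ∧
  (∀ r r' c c' : Fin n, r ≤ r' → IsLeader F T r c → IsLeader F T r' c' → c ≤ c')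

/-! A graded isomorphism `A(T) ≅ A(0)` pulls the generators of `A(0)` back to linear forms
`y = ∑ₛ aₛ xₛ` of `A(T)` with `y² = 0`. Since the relations of `A(T)` are homogeneous quadratic,
the quadratic coefficients of such a square satisfy `2 aⱼ aᵢ + tᵢⱼ aᵢ² = 0` for all `j < i`.
At a leader position `(r, c)` with witness `i₀`, the three instances `(c, r)`, `(i₀, r)`, `(i₀, c)`
of this relation combine to `t_rc a_r² (2 t_{r i₀} + t_rc t_{c i₀}) = 0`, so `a_r = 0`. Hence the
pulled-back generators, and with them `x_r = e⁻¹ (e x_r)`, lie in the span of the `xₛ` with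
`s ≠ r`, contradicting the linear independence of the generators of `A(T)`. -/

namespace MvPolynomial

variable {σ R : Type*} [CommSemiring R]

theorem coeff_mul_of_isHomogeneous {f g : MvPolynomial σ R} {d : ℕ} (hg : g.IsHomogeneous d)
    {μ : σ →₀ ℕ} (hμ : μ.degree ≤ d) : coeff μ (f * g) = coeff 0 f * coeff μ g := by
  classical
  rw [coeff_mul, Finset.sum_eq_single_of_mem (0, μ) (by simp)]
  rintro ⟨a, b⟩ hab hne
  rw [Finset.HasAntidiagonal.mem_antidiagonal] at hab
  by_cases hb : coeff b g = 0
  · rw [hb, mul_zero]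
  have hbd : b.degree = d := by rw [Finsupp.degree_eq_weight_one]; exact hg hb
  have hdeg : a.degree + b.degree = μ.degree := by rw [← hab, map_add]
  obtain rfl : a = 0 := by rw [← Finsupp.degree_eq_zero_iff]; omega
  simp_all

theorem exists_mem_span_coeff_eq_of_mem_ideal_span {S : Set (MvPolynomial σ R)} {d : ℕ}
    (hS : S ⊆ homogeneousSubmodule σ R d) {q : MvPolynomial σ R} (hq : q ∈ Ideal.span S) :
    ∃ p ∈ Submodule.span R S, ∀ μ : σ →₀ ℕ, μ.degree ≤ d → coeff μ q = coeff μ p := by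
  obtain ⟨c, hc, rfl⟩ := Submodule.mem_span_set.mp hq
  refine ⟨c.sum fun g a => coeff 0 a • g,
    Submodule.sum_mem _ fun g hg => Submodule.smul_mem _ _ (Submodule.subset_span (hc hg)),
    fun μ hμ => ?_⟩
  simp only [Finsupp.sum, coeff_sum, smul_eq_mul, coeff_smul]
  exact Finset.sum_congr rfl fun g hg => coeff_mul_of_isHomogeneous (hS (hc hg)) hμ

theorem coeff_eq_zero_of_mem_ideal_span {S : Set (MvPolynomial σ R)} {d : ℕ}
    (hS : S ⊆ homogeneousSubmodule σ R d) {q : MvPolynomial σ R} (hq : q ∈ Ideal.span S)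
    {μ : σ →₀ ℕ} (hμ : μ.degree < d) : coeff μ q = 0 := by
  obtain ⟨p, hp, hpq⟩ := exists_mem_span_coeff_eq_of_mem_ideal_span hS hq
  rw [hpq μ hμ.le]
  exact (Submodule.span_le.mpr hS hp : p.IsHomogeneous d).coeff_eq_zero hμ.ne

theorem X_mul_X_eq_monomial (s t : σ) :
    (X s * X t : MvPolynomial σ R) = monomial (Finsupp.single s 1 + Finsupp.single t 1) 1 := by
  rw [X, X, monomial_mul, one_mul]

theorem single_one_add_single_one_inj {s t j i : σ} :
    Finsupp.single s 1 + Finsupp.single t 1 = Finsupp.single j 1 + Finsupp.single i 1 ↔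
      (s = j ∧ t = i) ∨ (s = i ∧ t = j) := by
  simp [Finsupp.single_add_single_eq_single_add_single]

theorem sq_sum_C_mul_X [Fintype σ] (a : σ → R) :
    (∑ s, C (a s) * X s) ^ 2 =
      ∑ s, ∑ t, monomial (Finsupp.single s 1 + Finsupp.single t 1) (a s * a t) := by
  rw [sq, Finset.sum_mul_sum]
  refine Fintype.sum_congr _ _ fun s => Fintype.sum_congr _ _ fun t => ?_
  rw [← mul_one (a s * a t), ← C_mul_monomial, ← X_mul_X_eq_monomial, C_mul]
  ring

theorem coeff_sq_sum_C_mul_X_of_ne [Fintype σ] [DecidableEq σ] (a : σ → R) {j i : σ}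
    (hji : j ≠ i) :
    coeff (Finsupp.single j 1 + Finsupp.single i 1) ((∑ s, C (a s) * X s) ^ 2) =
      2 * a j * a i := by
  simp only [sq_sum_C_mul_X, coeff_sum, coeff_monomial, single_one_add_single_one_inj, ite_or]
  rw [Fintype.sum_eq_add j i hji fun s hs => by simp [hs.1, hs.2]]
  simp only [true_and, hji, hji.symm, false_and, ↓reduceIte, Finset.sum_ite_eq', Finset.mem_univ]
  ring

theorem coeff_sq_sum_C_mul_X_self [Fintype σ] [DecidableEq σ] (a : σ → R) (i : σ) :
    coeff (Finsupp.single i 1 + Finsupp.single i 1) ((∑ s, C (a s) * X s) ^ 2) = a i ^ 2 := by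
  simp only [sq_sum_C_mul_X, coeff_sum, coeff_monomial, single_one_add_single_one_inj, or_self]
  simp [ite_and, sq]

end MvPolynomial

section

variable {F} {n : ℕ}

theorem relSet_subset_homogeneousSubmodule (T : Matrix (Fin n) (Fin n) F) :
    relSet F T ⊆ homogeneousSubmodule (Fin n) F 2 := by
  rintro _ ⟨i, rfl⟩
  refine ((isHomogeneous_X F i).pow 2).sub (IsHomogeneous.sum _ _ _ fun j _ => ?_)
  rw [mul_assoc, X_mul_X_eq_monomial, C_mul_monomial]
  exact isHomogeneous_monomial _ (by simp [map_add, Finsupp.degree_single])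

theorem coeff_pair_add_mul_coeff_sq_of_mem_relSet {T : Matrix (Fin n) (Fin n) F}
    {g : MvPolynomial (Fin n) F} (hg : g ∈ relSet F T) {j i : Fin n} (hji : j < i) :
    coeff (Finsupp.single j 1 + Finsupp.single i 1) g +
      T i j * coeff (Finsupp.single i 1 + Finsupp.single i 1) g = 0 := by
  obtain ⟨m, rfl⟩ := hg
  simp only [sq, mul_assoc, X_mul_X_eq_monomial, coeff_sub, coeff_sum, C_mul_monomial,
    coeff_monomial, single_one_add_single_one_inj]
  rcases eq_or_ne m i with rfl | hmi
  · simp [hji.ne', Finset.sum_ite_eq', hji]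
  · simp only [hmi, false_and, and_false, or_false, false_or, if_false, mul_one]
    rw [Finset.sum_const_zero, Finset.sum_eq_zero fun l hl => if_neg ?_]
    · ring
    rintro ⟨rfl, rfl⟩
    exact (Finset.mem_filter.1 hl).2.not_gt hji

theorem coeff_pair_add_mul_coeff_sq_of_mem_span {T : Matrix (Fin n) (Fin n) F}
    {q : MvPolynomial (Fin n) F} (hq : q ∈ Ideal.span (relSet F T)) {j i : Fin n} (hji : j < i) :
    coeff (Finsupp.single j 1 + Finsupp.single i 1) q +
      T i j * coeff (Finsupp.single i 1 + Finsupp.single i 1) q = 0 := by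
  obtain ⟨p, hp, hpq⟩ :=
    exists_mem_span_coeff_eq_of_mem_ideal_span (relSet_subset_homogeneousSubmodule T) hq
  let ℓ : MvPolynomial (Fin n) F →ₗ[F] F :=
    lcoeff F (Finsupp.single j 1 + Finsupp.single i 1) +
      T i j • lcoeff F (Finsupp.single i 1 + Finsupp.single i 1)
  have hℓ : Submodule.span F (relSet F T) ≤ LinearMap.ker ℓ := Submodule.span_le.mpr
    fun g hg => coeff_pair_add_mul_coeff_sq_of_mem_relSet hg hji
  rw [hpq _ (by simp [map_add, Finsupp.degree_single]),
    hpq _ (by simp [map_add, Finsupp.degree_single])]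
  exact hℓ hp

theorem mk_sum_C_mul_X (T : Matrix (Fin n) (Fin n) F) (a : Fin n → F) :
    Ideal.Quotient.mk (Ideal.span (relSet F T)) (∑ s, C (a s) * X s) =
      ∑ s, a s • NTgen F T s := by
  rw [← Ideal.Quotient.mkₐ_eq_mk F]
  simp [NTgen, ← smul_eq_C_mul]

theorem linearIndependent_NTgen (T : Matrix (Fin n) (Fin n) F) :
    LinearIndependent F (NTgen F T) := by
  refine Fintype.linearIndependent_iff.mpr fun a ha i => ?_
  rw [← mk_sum_C_mul_X, Ideal.Quotient.eq_zero_iff_mem] at ha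
  have := coeff_eq_zero_of_mem_ideal_span (relSet_subset_homogeneousSubmodule T) ha
    (μ := Finsupp.single i 1) (by simp [Finsupp.degree_single])
  simpa [coeff_sum, coeff_C_mul, coeff_X, Finsupp.single_left_inj] using this

theorem NTgen_zero_sq (k : Fin n) : NTgen F (0 : Matrix (Fin n) (Fin n) F) k ^ 2 = 0 := by
  rw [NTgen, ← map_pow, Ideal.Quotient.eq_zero_iff_mem]
  exact Ideal.subset_span ⟨k, by simp⟩

theorem two_mul_mul_add_mul_sq_eq_zero {T : Matrix (Fin n) (Fin n) F} {a : Fin n → F}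
    (ha : (∑ s, a s • NTgen F T s) ^ 2 = 0) {j i : Fin n} (hji : j < i) :
    2 * a j * a i + T i j * a i ^ 2 = 0 := by
  have hsq : (∑ s, C (a s) * X s) ^ 2 ∈ Ideal.span (relSet F T) := by
    rw [← Ideal.Quotient.eq_zero_iff_mem, map_pow, mk_sum_C_mul_X, ha]
  simpa [coeff_sq_sum_C_mul_X_of_ne _ hji.ne, coeff_sq_sum_C_mul_X_self] using
    coeff_pair_add_mul_coeff_sq_of_mem_span hsq hji

theorem eq_zero_of_two_mul_mul_add_mul_sq_eq_zero {T : Matrix (Fin n) (Fin n) F}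
    {a : Fin n → F} (ha : ∀ j i, j < i → 2 * a j * a i + T i j * a i ^ 2 = 0)
    {r c i₀ : Fin n} (hrc : T r c ≠ 0) (hcr : c < r) (hi₀c : i₀ < c)
    (hkey : 2 * T r i₀ + T r c * T c i₀ ≠ 0) : a r = 0 := by
  by_contra har
  have hc : 2 * a c = -(T r c * a r) :=
    mul_right_cancel₀ har (by linear_combination ha c r hcr)
  have hi₀ : 2 * a i₀ = -(T r i₀ * a r) :=
    mul_right_cancel₀ har (by linear_combination ha i₀ r (hi₀c.trans hcr))
  -- `4 (2 a_{i₀} a_c + t_{c i₀} a_c²)` with `2 a_c` and `2 a_{i₀}` substituted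
  have key : T r c * a r ^ 2 * (2 * T r i₀ + T r c * T c i₀) = 0 := by
    linear_combination 4 * ha i₀ c hi₀c + (2 * T r i₀ * a r + T r c * T c i₀ * a r -
      2 * T c i₀ * a c) * hc - 4 * a c * hi₀
  simp_all

theorem mem_span_NTgen_compl_of_sq_eq_zero {T : Matrix (Fin n) (Fin n) F} {r c i₀ : Fin n}
    (hrc : T r c ≠ 0) (hcr : c < r) (hi₀c : i₀ < c) (hkey : 2 * T r i₀ + T r c * T c i₀ ≠ 0)
    {y : NTAlg F T} (hy : y ∈ Submodule.span F (Set.range (NTgen F T))) (hy2 : y ^ 2 = 0) :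
    y ∈ Submodule.span F (NTgen F T '' {r}ᶜ) := by
  obtain ⟨a, rfl⟩ := (Submodule.mem_span_range_iff_exists_fun F).mp hy
  have har : a r = 0 := eq_zero_of_two_mul_mul_add_mul_sq_eq_zero
    (fun _ _ => two_mul_mul_add_mul_sq_eq_zero hy2) hrc hcr hi₀c hkey
  refine Submodule.sum_mem _ fun s _ => ?_
  rcases eq_or_ne s r with rfl | hs
  · simp [har]
  · exact Submodule.smul_mem _ _ (Submodule.subset_span ⟨s, hs, rfl⟩)

theorem exists_isLeader {T : Matrix (Fin n) (Fin n) F} {r c₀ : Fin n} (h : T r c₀ ≠ 0) :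
    ∃ c, IsLeader F T r c := by
  classical
  obtain ⟨c, hc, hmax⟩ :=
    Finset.exists_max_image (Finset.univ.filter fun c => T r c ≠ 0) id ⟨c₀, by simp [h]⟩
  exact ⟨c, (Finset.mem_filter.mp hc).2, fun j hj => by_contra fun hTj =>
    (hmax j (by simp [hTj])).not_gt hj⟩

end

theorem stmt19 {n : ℕ} (T : Matrix (Fin n) (Fin n) F)
    (hT : SLTM F T) (hREF : Is1REF F T) (h : NTIso F T 0) :
    T = 0 := by
  by_contra hne
  obtain ⟨r, c₀, hrc₀⟩ : ∃ r c, T r c ≠ 0 := by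
    contrapose! hne
    exact Matrix.ext hne
  obtain ⟨c, hlead⟩ := exists_isLeader hrc₀
  obtain ⟨-, i₀, hi₀c, hkey⟩ := hREF.2.1 r c hlead
  have hcr : c < r := lt_of_not_ge fun hrc => hlead.1 (hT r c hrc)
  obtain ⟨e, he, he_symm⟩ := h
  have hmap : Submodule.map e.symm.toLinearMap (Submodule.span F (Set.range (NTgen F 0))) ≤
      Submodule.span F (NTgen F T '' {r}ᶜ) := by
    rw [Submodule.map_span, Submodule.span_le]
    rintro _ ⟨_, ⟨k, rfl⟩, rfl⟩
    exact mem_span_NTgen_compl_of_sq_eq_zero hlead.1 hcr hi₀c hkey (he_symm k)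
      (by rw [AlgEquiv.toLinearMap_apply, ← map_pow, NTgen_zero_sq, map_zero])
  have hr : NTgen F T r ∈ Submodule.span F (NTgen F T '' {r}ᶜ) :=
    hmap ⟨e (NTgen F T r), he r, e.symm_apply_apply _⟩
  exact (linearIndependent_NTgen T).notMem_span_image (by simp) hr
end
end
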